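/- arXiv:2512.16748 — 2 statements merged into one kernel-verified Lean document; each statement's English description precedes it below -/
import Mathlib

section
/- Let P, Q be Borel probability measures on ℝ^d with finite first moments such that E_Q[g] ≤ E_P[g] + δ·L for every L-Lipschitz g (all L > 0). Then for any x ∈ ℝ^d and α ∈ (0,1), CVaR_α under Q of the loss −⟨ξ,x⟩ satisfies CVaR_α^Q(−⟨ξ,x⟩) ≤ CVaR_α^P(−⟨ξ,x⟩) + (δ/α)·‖x‖₂, where CVaR_α^μ(L) = inf_t { t + (1/α)·E_μ[(L − t)₊] }. -/
/-!
For each threshold `t`, the Rockafellar–Uryasev integrand `ξ ↦ (-⟪ξ, x⟫ - t)₊` is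
`‖x‖`-Lipschitz, so the transport hypothesis bounds its `Q`-mean by its `P`-mean plus `δ‖x‖`;
dividing by `α` compares the two objectives at every `t`. Passing to the infimum needs the
`Q`-objective to be bounded below, which holds because it dominates `E_Q[-⟪ξ, x⟫]` when `α ≤ 1`.
-/

open MeasureTheory RealInnerProductSpace

/-- The Rockafellar–Uryasev objective: `CVaR_α^μ(X) = ⨅ t, cvarObjective μ X α t`. -/
noncomputable def cvarObjective {Ω : Type*} [MeasurableSpace Ω] (μ : Measure Ω) (X : Ω → ℝ)
    (α t : ℝ) : ℝ :=
  t + (1 / α) * ∫ ω, max (X ω - t) 0 ∂μ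

section cvarObjective

variable {Ω : Type*} [MeasurableSpace Ω] {μ ν : Measure Ω} {X : Ω → ℝ} {α : ℝ}

theorem integral_le_cvarObjective [IsProbabilityMeasure μ] (hX : Integrable X μ) (hα0 : 0 < α)
    (hα1 : α ≤ 1) (t : ℝ) : ∫ ω, X ω ∂μ ≤ cvarObjective μ X α t := by
  have hshift : Integrable (fun ω => X ω - t) μ := hX.sub (integrable_const t)
  have hmean : ∫ ω, X ω ∂μ - t ≤ ∫ ω, max (X ω - t) 0 ∂μ := calc
    ∫ ω, X ω ∂μ - t = ∫ ω, (X ω - t) ∂μ := by simp [integral_sub hX (integrable_const t)]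
    _ ≤ ∫ ω, max (X ω - t) 0 ∂μ := integral_mono hshift hshift.pos_part fun _ => le_max_left _ _
  have hscale : ∫ ω, max (X ω - t) 0 ∂μ ≤ (1 / α) * ∫ ω, max (X ω - t) 0 ∂μ :=
    le_mul_of_one_le_left (integral_nonneg fun _ => le_max_right _ _) (one_le_one_div hα0 hα1)
  unfold cvarObjective
  linarith

theorem bddBelow_range_cvarObjective [IsProbabilityMeasure μ] (hX : Integrable X μ)
    (hα0 : 0 < α) (hα1 : α ≤ 1) : BddBelow (Set.range (cvarObjective μ X α)) :=
  ⟨_, Set.forall_mem_range.2 (integral_le_cvarObjective hX hα0 hα1)⟩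

theorem cvarObjective_le_add_of_integral_le {t c : ℝ} (hα : 0 ≤ α)
    (h : ∫ ω, max (X ω - t) 0 ∂ν ≤ ∫ ω, max (X ω - t) 0 ∂μ + c) :
    cvarObjective ν X α t ≤ cvarObjective μ X α t + c / α := by
  have := mul_le_mul_of_nonneg_left h (one_div_nonneg.2 hα)
  unfold cvarObjective
  linarith [show 1 / α * c = c / α by ring]

end cvarObjective

theorem ciInf_le_ciInf_add {ι : Type*} [Nonempty ι] {f g : ι → ℝ} {c : ℝ}
    (hf : BddBelow (Set.range f)) (h : ∀ i, f i ≤ g i + c) : ⨅ i, f i ≤ (⨅ i, g i) + c :=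
  sub_le_iff_le_add.1 <| le_ciInf fun i => sub_le_iff_le_add.2 <| (ciInf_le hf i).trans (h i)

theorem lipschitzWith_max_neg_inner_sub {E : Type*} [NormedAddCommGroup E] [InnerProductSpace ℝ E]
    (x : E) (t : ℝ) : LipschitzWith ‖x‖₊ fun ξ : E => max (-⟪ξ, x⟫ - t) 0 := by
  refine (LipschitzWith.of_dist_le_mul fun a b => ?_).max_const 0
  have hdiff : (-⟪a, x⟫ - t) - (-⟪b, x⟫ - t) = ⟪b - a, x⟫ := by rw [inner_sub_left]; ring
  rw [Real.dist_eq, hdiff, coe_nnnorm, dist_comm, dist_eq_norm, mul_comm]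
  exact abs_real_inner_le_norm _ _

theorem wasserstein_cvar_bound_general
    {d : ℕ} (P Q : Measure (EuclideanSpace ℝ (Fin d)))
    [IsProbabilityMeasure P] [IsProbabilityMeasure Q]
    (hQ : Integrable (fun ξ => ‖ξ‖) Q)
    (δ : ℝ)
    (hKR : ∀ (L : ℝ), 0 < L → ∀ g : EuclideanSpace ℝ (Fin d) → ℝ,
      LipschitzWith (Real.toNNReal L) g →
      (∫ ξ, g ξ ∂Q) ≤ (∫ ξ, g ξ ∂P) + δ * L)
    (x : EuclideanSpace ℝ (Fin d)) (α : ℝ) (hα0 : 0 < α) (hα1 : α < 1) :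
    (⨅ t : ℝ, (t + (1 / α) * ∫ ξ, max (-⟪ξ, x⟫ - t) 0 ∂Q))
      ≤ (⨅ t : ℝ, (t + (1 / α) * ∫ ξ, max (-⟪ξ, x⟫ - t) 0 ∂P)) + (δ / α) * ‖x‖ := by
  set X : EuclideanSpace ℝ (Fin d) → ℝ := fun ξ => -⟪ξ, x⟫
  have hX : Integrable X Q :=
    ((integrable_norm_iff aestronglyMeasurable_id).1 hQ).inner_const x |>.neg
  have htransport : ∀ t, ∫ ξ, max (X ξ - t) 0 ∂Q ≤ ∫ ξ, max (X ξ - t) 0 ∂P + δ * ‖x‖ := by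
    intro t
    rcases eq_or_ne x 0 with rfl | hx
    · simp [X]
    · exact hKR ‖x‖ (norm_pos_iff.2 hx) _ (by simpa using lipschitzWith_max_neg_inner_sub x t)
  rw [div_mul_eq_mul_div]
  exact ciInf_le_ciInf_add (bddBelow_range_cvarObjective hX hα0 hα1.le)
    fun t => cvarObjective_le_add_of_integral_le hα0.le (htransport t)

/-- Wasserstein Lipschitz bound for CVaR:
if `E_Q[g] ≤ E_P[g] + δ L` for every `L`-Lipschitz `g`, then
`CVaR_α^Q(−⟨ξ,x⟩) ≤ CVaR_α^P(−⟨ξ,x⟩) + (δ/α)‖x‖`. -/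
theorem wasserstein_cvar_bound
    {d : ℕ} (P Q : Measure (EuclideanSpace ℝ (Fin d)))
    [IsProbabilityMeasure P] [IsProbabilityMeasure Q]
    (hP : Integrable (fun ξ => ‖ξ‖) P) (hQ : Integrable (fun ξ => ‖ξ‖) Q)
    (δ : ℝ) (hδ : 0 ≤ δ)
    (hKR : ∀ (L : ℝ), 0 < L → ∀ g : EuclideanSpace ℝ (Fin d) → ℝ,
      LipschitzWith (Real.toNNReal L) g →
      (∫ ξ, g ξ ∂Q) ≤ (∫ ξ, g ξ ∂P) + δ * L)
    (x : EuclideanSpace ℝ (Fin d)) (α : ℝ) (hα0 : 0 < α) (hα1 : α < 1) :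
    (⨅ t : ℝ, (t + (1 / α) * ∫ ξ, max (-⟪ξ, x⟫ - t) 0 ∂Q))
      ≤ (⨅ t : ℝ, (t + (1 / α) * ∫ ξ, max (-⟪ξ, x⟫ - t) 0 ∂P)) + (δ / α) * ‖x‖ :=
  wasserstein_cvar_bound_general P Q hQ δ hKR x α hα0 hα1
end

section
/- Fix α ∈ (0,1), δ ≥ 0, γ ∈ ℝ, and data ξ₁,…,ξ_n ∈ ℝ^d. If (x, v, r, z) satisfies the reformulation constraints δv + (1/n)Σᵢ zᵢ ≤ αr, r ≤ zᵢ + γ + ⟨ξᵢ,x⟩ for all i, ‖x‖₂ ≤ v, v ≥ 0, r ≥ 0, zᵢ ≥ 0, then the empirical CVaR plus Wasserstein margin is controlled: inf_t { t + (1/α)·(1/n)Σᵢ max(−⟨ξᵢ,x⟩ − t, 0) } + (δ/α)‖x‖₂ ≤ γ. -/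
open RealInnerProductSpace

/-- One direction of the exact Wasserstein-DRO CVaR reformulation: the
reformulation constraints imply the empirical CVaR plus Wasserstein margin is
at most `γ`. -/
theorem wasserstein_cvar_reformulation_sound
    {d n : ℕ} (hn : 0 < n) (α δ γ : ℝ) (hα0 : 0 < α) (hα1 : α < 1) (hδ : 0 ≤ δ)
    (ξ : Fin n → EuclideanSpace ℝ (Fin d))
    (x : EuclideanSpace ℝ (Fin d)) (v r : ℝ) (z : Fin n → ℝ)
    (h1 : δ * v + (1 / n) * ∑ i, z i ≤ α * r)
    (h2 : ∀ i, r ≤ z i + γ + ⟪ξ i, x⟫)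
    (h3 : ‖x‖ ≤ v) (hv : 0 ≤ v) (hr : 0 ≤ r) (hz : ∀ i, 0 ≤ z i) :
    (⨅ t : ℝ, (t + (1 / α) * ((1 / n) * ∑ i, max (-⟪ξ i, x⟫ - t) 0)))
      + (δ / α) * ‖x‖ ≤ γ := by
  have hnR : (0 : ℝ) < n := by exact_mod_cast hn
  set f : ℝ → ℝ := fun t => t + (1 / α) * ((1 / n) * ∑ i, max (-⟪ξ i, x⟫ - t) 0)
    with hf
  set c : ℝ := (1 / n) * ∑ i, -⟪ξ i, x⟫ with hc
  have hbdd : BddBelow (Set.range f) := by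
    refine ⟨c, ?_⟩
    rintro _ ⟨t, rfl⟩
    have hS0 : 0 ≤ (1 / (n:ℝ)) * ∑ i, max (-⟪ξ i, x⟫ - t) 0 := by
      apply mul_nonneg (by positivity)
      exact Finset.sum_nonneg fun i _ => le_max_right _ _
    have hS1 : c - t ≤ (1 / (n:ℝ)) * ∑ i, max (-⟪ξ i, x⟫ - t) 0 := by
      have : ∑ i, (-⟪ξ i, x⟫ - t) ≤ ∑ i, max (-⟪ξ i, x⟫ - t) 0 :=
        Finset.sum_le_sum fun i _ => le_max_left _ _
      have := mul_le_mul_of_nonneg_left this (by positivity : (0:ℝ) ≤ 1 / n)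
      rw [hc]
      calc (1 / (n:ℝ)) * ∑ i, -⟪ξ i, x⟫ - t
          = (1 / (n:ℝ)) * ∑ i, (-⟪ξ i, x⟫ - t) := by
            rw [Finset.sum_sub_distrib, mul_sub, Finset.sum_const,
              Finset.card_univ, Fintype.card_fin, nsmul_eq_mul]
            field_simp
        _ ≤ _ := this
    set S : ℝ := (1 / (n:ℝ)) * ∑ i, max (-⟪ξ i, x⟫ - t) 0
    show c ≤ t + (1 / α) * S
    have h1α : 1 ≤ 1 / α := by
      rw [le_div_iff₀ hα0]; linarith
    rcases le_total c t with h | h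
    · nlinarith [mul_nonneg (by linarith : (0:ℝ) ≤ 1 / α) hS0]
    · nlinarith [mul_le_mul_of_nonneg_right h1α (le_trans (by linarith) hS1)]
  have key : f (γ - r) ≤ γ - (δ / α) * v := by
    have hmax : ∀ i, max (-⟪ξ i, x⟫ - (γ - r)) 0 ≤ z i := by
      intro i
      exact max_le (by have := h2 i; linarith) (hz i)
    have hsum : (1 / (n:ℝ)) * ∑ i, max (-⟪ξ i, x⟫ - (γ - r)) 0
        ≤ (1 / (n:ℝ)) * ∑ i, z i := by
      apply mul_le_mul_of_nonneg_left _ (by positivity : (0:ℝ) ≤ 1 / n)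
      exact Finset.sum_le_sum fun i _ => hmax i
    have hzsum : (1 / α) * ((1 / (n:ℝ)) * ∑ i, z i) ≤ r - (δ / α) * v := by
      have hT : (1 / (n:ℝ)) * ∑ i, z i ≤ α * r - δ * v := by linarith
      have heq : (1 / α) * (α * r - δ * v) = r - (δ / α) * v := by
        field_simp
      calc (1 / α) * ((1 / (n:ℝ)) * ∑ i, z i) ≤ (1 / α) * (α * r - δ * v) :=
            mul_le_mul_of_nonneg_left hT (by positivity)
        _ = r - (δ / α) * v := heq
    have : f (γ - r) = γ - r + (1 / α) * ((1 / (n:ℝ)) * ∑ i, max (-⟪ξ i, x⟫ - (γ - r)) 0) := rfl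
    rw [this]
    have h1α : 0 ≤ 1 / α := by positivity
    nlinarith [mul_le_mul_of_nonneg_left hsum h1α]
  have hinf : (⨅ t : ℝ, f t) ≤ γ - (δ / α) * v :=
    le_trans (ciInf_le hbdd (γ - r)) key
  have hxv : (δ / α) * ‖x‖ ≤ (δ / α) * v :=
    mul_le_mul_of_nonneg_left h3 (by positivity)
  calc (⨅ t : ℝ, f t) + (δ / α) * ‖x‖ ≤ (γ - (δ / α) * v) + (δ / α) * v := by
        linarith
    _ = γ := by ring
end
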